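/- arXiv:2603.02429 — 4 statements merged into one kernel-verified Lean document; each statement's English description precedes it below -/
import Mathlib

section
/- Let β, T > 0 and let (M_k)_{k≥0} be nonnegative reals with M_0 = 1 and M_k ≤ ((2k-2)β + T) M_{k-1} for all k ≥ 1. Then for any 0 < λ < 1/(4β), the series Σ_{k≥0} λ^k M_k / k! converges and satisfies log(Σ_{k≥0} λ^k M_k / k!) ≤ (T/(2β)) log(1/(1 - 2βλ)) ≤ 2λT. -/
open Finset

private lemma poly_ident (a : ℝ) (c : ℕ → ℝ)
    (hc : ∀ k : ℕ, ((k : ℝ) + 1) * c (k + 1) = (a + k) * c k) (n : ℕ) (x : ℝ) :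
    (1 - x) * ∑ k ∈ Finset.range (n + 1), c k * ((k : ℝ) * x ^ (k - 1))
      - a * ∑ k ∈ Finset.range (n + 1), c k * x ^ k
      = -((a + n) * c n * x ^ n) := by
  induction n with
  | zero => simp
  | succ n ih =>
      rw [Finset.sum_range_succ, Finset.sum_range_succ (f := fun k => c k * x ^ k)]
      have h := hc n
      have hexp : (n + 1 - 1 : ℕ) = n := rfl
      rw [hexp]
      push_cast
      push_cast at ih h
      linear_combination ih + x ^ n * h

private lemma partial_sum_le (a u : ℝ) (ha : 0 < a) (hu0 : 0 ≤ u) (hu1 : u < 1)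
    (c : ℕ → ℝ) (hc0 : c 0 = 1) (hcnn : ∀ k, 0 ≤ c k)
    (hc : ∀ k : ℕ, ((k : ℝ) + 1) * c (k + 1) = (a + k) * c k) (n : ℕ) :
    ∑ k ∈ Finset.range n, c k * u ^ k ≤ (1 - u) ^ (-a) := by
  have main : ∀ m : ℕ, ∑ k ∈ Finset.range (m + 1), c k * u ^ k ≤ (1 - u) ^ (-a) := by
    intro m
    have hderiv : ∀ x : ℝ, x < 1 →
        HasDerivAt (fun y : ℝ => (1 - y) ^ a * ∑ k ∈ Finset.range (m + 1), c k * y ^ k)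
          (-((1 - x) ^ (a - 1) * ((a + m) * c m * x ^ m))) x := by
      intro x hx
      have h1x : (0 : ℝ) < 1 - x := by linarith
      have hA : HasDerivAt (fun y : ℝ => (1 - y) ^ a) (-(a * (1 - x) ^ (a - 1))) x := by
        have h2 : HasDerivAt (fun y : ℝ => 1 - y) (-1) x := by
          simpa using (hasDerivAt_id x).const_sub 1
        have h := (Real.hasDerivAt_rpow_const (x := 1 - x) (p := a)
          (Or.inl (ne_of_gt h1x))).comp x h2
        simpa [mul_comm, Function.comp_def] using h
      have hB : HasDerivAt (fun y : ℝ => ∑ k ∈ Finset.range (m + 1), c k * y ^ k)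
          (∑ k ∈ Finset.range (m + 1), c k * ((k : ℝ) * x ^ (k - 1))) x := by
        apply HasDerivAt.fun_sum
        intro k _
        simpa [mul_comm, mul_assoc] using (hasDerivAt_pow k x).const_mul (c k)
      have hprod := hA.mul hB
      refine hprod.congr_deriv ?_
      symm
      have hsplit : (1 - x) ^ a = (1 - x) ^ (a - 1) * (1 - x) := by
        rw [← Real.rpow_add_one h1x.ne' (a - 1), sub_add_cancel]
      rw [hsplit]
      have hpi := poly_ident a c hc m x
      linear_combination (-(1 - x) ^ (a - 1)) * hpi
    have hanti : AntitoneOn (fun y : ℝ =>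
        (1 - y) ^ a * ∑ k ∈ Finset.range (m + 1), c k * y ^ k) (Set.Icc 0 u) := by
      apply antitoneOn_of_deriv_nonpos (convex_Icc 0 u)
      · intro x hx
        exact (hderiv x (lt_of_le_of_lt hx.2 hu1)).continuousAt.continuousWithinAt
      · intro x hx
        rw [interior_Icc] at hx
        exact (hderiv x (lt_trans hx.2 hu1)).differentiableAt.differentiableWithinAt
      · intro x hx
        rw [interior_Icc] at hx
        rw [(hderiv x (lt_trans hx.2 hu1)).deriv]
        have h1 : (0 : ℝ) ≤ (1 - x) ^ (a - 1) * ((a + m) * c m * x ^ m) := by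
          apply mul_nonneg (Real.rpow_nonneg (by linarith [hx.2, hu1]) _)
          apply mul_nonneg (mul_nonneg (by positivity) (hcnn m))
            (pow_nonneg (le_of_lt hx.1) m)
        linarith
    have hgu := hanti (Set.mem_Icc.2 ⟨le_refl 0, hu0⟩) (Set.mem_Icc.2 ⟨hu0, le_refl u⟩) hu0
    have hS0 : ∑ k ∈ Finset.range (m + 1), c k * (0 : ℝ) ^ k = 1 := by
      rw [Finset.sum_eq_single 0]
      · simp [hc0]
      · intro b _ hb; simp [zero_pow hb]
      · intro h; exact absurd (Finset.mem_range.2 m.succ_pos) h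
    simp only [sub_zero, Real.one_rpow, one_mul, hS0] at hgu
    have hpow : (0 : ℝ) < (1 - u) ^ a := Real.rpow_pos_of_pos (by linarith) a
    rw [Real.rpow_neg (by linarith : (0 : ℝ) ≤ 1 - u), ← one_div, le_div_iff₀ hpow]
    nlinarith [hgu]
  cases n with
  | zero =>
      simp only [Finset.range_zero, Finset.sum_empty]
      exact le_of_lt (Real.rpow_pos_of_pos (by linarith) _)
  | succ m => exact main m

/-- Under the moment recursion of Statement 4, for `0 < λ < 1/(4β)` the series
`Σ λ^k M k / k!` converges and
`log (Σ λ^k M k / k!) ≤ (T/(2β)) log (1/(1-2βλ)) ≤ 2 λ T`. -/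
theorem moment_series_log_bound (β T lam : ℝ) (hβ : 0 < β) (hT : 0 < T)
    (M : ℕ → ℝ) (hM0 : M 0 = 1) (hMnn : ∀ k, 0 ≤ M k)
    (hrec : ∀ k : ℕ, 1 ≤ k → M k ≤ ((2 * (k : ℝ) - 2) * β + T) * M (k - 1))
    (hlam0 : 0 < lam) (hlam : lam < 1 / (4 * β)) :
    Summable (fun k : ℕ => lam ^ k * M k / (Nat.factorial k : ℝ)) ∧
    Real.log (∑' k : ℕ, lam ^ k * M k / (Nat.factorial k : ℝ)) ≤
      (T / (2 * β)) * Real.log (1 / (1 - 2 * β * lam)) ∧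
    (T / (2 * β)) * Real.log (1 / (1 - 2 * β * lam)) ≤ 2 * lam * T := by
  set u : ℝ := 2 * β * lam with hu_def
  set a : ℝ := T / (2 * β) with ha_def
  have hβ' : (0 : ℝ) < 2 * β := by linarith
  have ha : 0 < a := div_pos hT hβ'
  have hu0 : 0 < u := by positivity
  have hu2 : u < 1 / 2 := by
    have h4 : lam * (4 * β) < 1 := (lt_div_iff₀ (by positivity)).1 hlam
    rw [hu_def]; nlinarith
  have hu1 : u < 1 := by linarith
  have hTa : T = 2 * β * a := by rw [ha_def]; field_simp
  set c : ℕ → ℝ := fun k => (∏ j ∈ Finset.range k, (a + j)) / (Nat.factorial k : ℝ)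
    with hc_def
  have hc0 : c 0 = 1 := by simp [hc_def]
  have hcpos : ∀ k, 0 < c k := by
    intro k
    apply div_pos (Finset.prod_pos fun j _ => by positivity)
    exact_mod_cast Nat.factorial_pos k
  have hcrec : ∀ k : ℕ, ((k : ℝ) + 1) * c (k + 1) = (a + k) * c k := by
    intro k
    have hk : (Nat.factorial k : ℝ) ≠ 0 := by
      exact_mod_cast (Nat.factorial_pos k).ne'
    simp only [hc_def, Finset.prod_range_succ, Nat.factorial_succ, Nat.cast_mul,
      Nat.cast_add, Nat.cast_one]
    field_simp
  have hMle : ∀ k : ℕ, M k ≤ ∏ j ∈ Finset.range k, (2 * β * (a + j)) := by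
    intro k
    induction k with
    | zero => simp [hM0]
    | succ k ih =>
        have h := hrec (k + 1) (Nat.le_add_left 1 k)
        simp only [Nat.add_sub_cancel] at h
        have hcoef : ((2 * ((k : ℕ) + 1 : ℝ) - 2) * β + T) = 2 * β * (a + k) := by
          rw [hTa]; ring
        rw [Finset.prod_range_succ]
        calc M (k + 1) ≤ ((2 * ((k : ℕ) + 1 : ℝ) - 2) * β + T) * M k := by
              push_cast at h ⊢; exact h
          _ = (2 * β * (a + k)) * M k := by rw [hcoef]
          _ ≤ (2 * β * (a + k)) * ∏ j ∈ Finset.range k, (2 * β * (a + j)) := by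
              apply mul_le_mul_of_nonneg_left ih (by positivity)
          _ = (∏ j ∈ Finset.range k, (2 * β * (a + j))) * (2 * β * (a + k)) := by ring
  have hterm : ∀ k : ℕ, lam ^ k * M k / (Nat.factorial k : ℝ) ≤ c k * u ^ k := by
    intro k
    have hprod : ∏ j ∈ Finset.range k, (2 * β * (a + (j : ℝ)))
        = (2 * β) ^ k * ∏ j ∈ Finset.range k, (a + (j : ℝ)) := by
      rw [Finset.prod_mul_distrib, Finset.prod_const, Finset.card_range]
    have hk : (0 : ℝ) < (Nat.factorial k : ℝ) := by
      exact_mod_cast Nat.factorial_pos k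
    calc lam ^ k * M k / (Nat.factorial k : ℝ)
        ≤ lam ^ k * (∏ j ∈ Finset.range k, (2 * β * (a + j))) / (Nat.factorial k : ℝ) := by
          gcongr
          exact hMle k
      _ = c k * u ^ k := by
          rw [hprod, hc_def, hu_def]
          simp only [mul_pow]
          field_simp
  have hfnn : ∀ k : ℕ, 0 ≤ lam ^ k * M k / (Nat.factorial k : ℝ) := by
    intro k
    have := hMnn k
    positivity
  have hpartial : ∀ n : ℕ,
      ∑ k ∈ Finset.range n, lam ^ k * M k / (Nat.factorial k : ℝ) ≤ (1 - u) ^ (-a) := by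
    intro n
    calc ∑ k ∈ Finset.range n, lam ^ k * M k / (Nat.factorial k : ℝ)
        ≤ ∑ k ∈ Finset.range n, c k * u ^ k := Finset.sum_le_sum fun k _ => hterm k
      _ ≤ (1 - u) ^ (-a) :=
          partial_sum_le a u ha hu0.le hu1 c hc0 (fun k => (hcpos k).le) hcrec n
  have hsum : Summable (fun k : ℕ => lam ^ k * M k / (Nat.factorial k : ℝ)) :=
    summable_of_sum_range_le hfnn hpartial
  have htsum : (∑' k : ℕ, lam ^ k * M k / (Nat.factorial k : ℝ)) ≤ (1 - u) ^ (-a) :=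
    Real.tsum_le_of_sum_range_le hfnn hpartial
  have htsum1 : (1 : ℝ) ≤ ∑' k : ℕ, lam ^ k * M k / (Nat.factorial k : ℝ) := by
    have h0 := Summable.le_tsum hsum 0 (fun i _ => hfnn i)
    simpa [hM0] using h0
  refine ⟨hsum, ?_, ?_⟩
  · have hlog : Real.log (∑' k : ℕ, lam ^ k * M k / (Nat.factorial k : ℝ))
        ≤ Real.log ((1 - u) ^ (-a)) := Real.log_le_log (by linarith) htsum
    rw [Real.log_rpow (by linarith : (0 : ℝ) < 1 - u)] at hlog
    rw [one_div, Real.log_inv, mul_neg, ← neg_mul]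
    exact hlog
  · rw [one_div, Real.log_inv]
    have hlog2 : -Real.log (1 - u) ≤ 2 * u := by
      have hexp : Real.exp (-(2 * u)) ≤ 1 - u := by
        have h1 := Real.add_one_le_exp (2 * u)
        have h2 : (Real.exp (2 * u))⁻¹ ≤ (1 + 2 * u)⁻¹ := by
          apply inv_anti₀ (by positivity)
          linarith
        have h3 : (1 + 2 * u)⁻¹ ≤ 1 - u := by
          rw [inv_eq_one_div, div_le_iff₀ (by positivity : (0 : ℝ) < 1 + 2 * u)]
          nlinarith [mul_nonneg hu0.le (by linarith : (0 : ℝ) ≤ 1 - 2 * u)]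
        rw [Real.exp_neg]
        linarith
      have h4 := Real.log_le_log (Real.exp_pos _) hexp
      rw [Real.log_exp] at h4
      linarith
    calc a * -Real.log (1 - u) ≤ a * (2 * u) := mul_le_mul_of_nonneg_left hlog2 ha.le
      _ = 2 * lam * T := by rw [ha_def, hu_def]; field_simp
end

section
/- Let V : R^d → R be twice continuously differentiable with α I ⪯ ∇²V(x) ⪯ H ⪯ β I for all x (α ≥ 0), and let π(x) ∝ exp(-V(x)) be a probability measure. Then for each integer k ≥ 1, the moments M_k = E_π[‖∇V‖^{2k}] satisfy M_k ≤ ((2k-2)β + tr(H)) M_{k-1}. -/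
open MeasureTheory Matrix
open scoped ENNReal NNReal

set_option maxHeartbeats 4000000

lemma cs_bound {F : Type*} [NormedAddCommGroup F] [InnerProductSpace ℝ F]
    {β : ℝ} (hβ : 0 ≤ β) (B : F →L[ℝ] F →L[ℝ] ℝ)
    (hsymm : ∀ u w, B u w = B w u)
    (h0 : ∀ v, 0 ≤ B v v) (hup : ∀ v, B v v ≤ β * ‖v‖ ^ 2) (u w : F) :
    |B u w| ≤ β * ‖u‖ * ‖w‖ := by
  have hsq : (2 * B u w) ^ 2 ≤ 4 * (B u u * B w w) := by
    have hd : discrim (B w w) (2 * B u w) (B u u) ≤ 0 := by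
      apply discrim_le_zero
      intro t
      have h := h0 (u + t • w)
      simp only [map_add, ContinuousLinearMap.add_apply, _root_.map_smul,
        ContinuousLinearMap.smul_apply, smul_eq_mul] at h
      rw [hsymm w u] at h
      nlinarith [h]
    unfold discrim at hd
    nlinarith [hd]
  have hBu := hup u
  have hBw := hup w
  have h0u := h0 u
  have h0w := h0 w
  have hnu : (0:ℝ) ≤ ‖u‖ := norm_nonneg u
  have hnw : (0:ℝ) ≤ ‖w‖ := norm_nonneg w
  rcases abs_cases (B u w) with ⟨he, _⟩ | ⟨he, _⟩ <;> rw [he] <;>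
    nlinarith [sq_nonneg (‖u‖ * ‖w‖), mul_nonneg (mul_nonneg hβ hnu) hnw,
      mul_nonneg (sq_nonneg ‖u‖) (sq_nonneg ‖w‖), mul_le_mul hBu hBw h0w (by positivity : (0:ℝ) ≤ β * ‖u‖^2)]

/-- For `V` twice continuously differentiable with
`α I ⪯ ∇²V(x) ⪯ H ⪯ β I` and `π ∝ exp (-V)`, the moments `M_k = E_π[‖∇V‖^{2k}]` satisfy
`M_k ≤ ((2k-2)β + tr H) M_{k-1}` for `k ≥ 1`. -/
theorem gradient_moment_recursion
    (d : ℕ) (α β : ℝ) (hα : 0 ≤ α) (V : EuclideanSpace ℝ (Fin d) → ℝ)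
    (hV : ContDiff ℝ 2 V)
    (H : Matrix (Fin d) (Fin d) ℝ) (hH : H.PosSemidef)
    (hHess_lower : ∀ x v, α * ‖v‖ ^ 2 ≤ iteratedFDeriv ℝ 2 V x ![v, v])
    (hHess_upper : ∀ x v,
      iteratedFDeriv ℝ 2 V x ![v, v] ≤ (inner ℝ v (Matrix.toEuclideanLin H v) : ℝ))
    (hHβ : (β • (1 : Matrix (Fin d) (Fin d) ℝ) - H).PosSemidef)
    (π : Measure (EuclideanSpace ℝ (Fin d))) [IsProbabilityMeasure π] (Z : ℝ≥0∞)
    (hπ : π = Z • volume.withDensity fun x => ENNReal.ofReal (Real.exp (-V x)))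
    (hint : ∀ n : ℕ, Integrable (fun x => ‖gradient V x‖ ^ n) π)
    (k : ℕ) (hk : 1 ≤ k) :
    ∫ x, ‖gradient V x‖ ^ (2 * k) ∂π ≤
      ((2 * (k : ℝ) - 2) * β + H.trace) * ∫ x, ‖gradient V x‖ ^ (2 * (k - 1)) ∂π := by
  classical
  rcases Nat.eq_zero_or_pos d with hd0 | hd0
  · -- degenerate case d = 0
    subst hd0
    have hg0 : ∀ x : EuclideanSpace ℝ (Fin 0), gradient V x = 0 := fun x => Subsingleton.elim _ _
    have htr : H.trace = 0 := by simp [Matrix.trace]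
    have hL : (∫ x, ‖gradient V x‖ ^ (2*k) ∂π) = 0 := by
      have : ∀ x : EuclideanSpace ℝ (Fin 0), ‖gradient V x‖ ^ (2*k) = 0 := by
        intro x; rw [hg0, norm_zero]; exact zero_pow (by omega)
      simp [this]
    rw [hL, htr]
    rcases eq_or_lt_of_le hk with hk1 | hk2
    · rw [← hk1]; norm_num
    · have h2 : 2*(k-1) ≠ 0 := by omega
      have : (∫ x, ‖gradient V x‖ ^ (2*(k-1)) ∂π) = 0 := by
        have : ∀ x : EuclideanSpace ℝ (Fin 0), ‖gradient V x‖ ^ (2*(k-1)) = 0 := by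
          intro x; rw [hg0, norm_zero]; exact zero_pow h2
        simp [this]
      rw [this]; simp
  -- main case
  set g : EuclideanSpace ℝ (Fin d) → EuclideanSpace ℝ (Fin d) := gradient V with hgdef
  set ρ : EuclideanSpace ℝ (Fin d) → ℝ := fun x => Real.exp (-V x) with hρdef
  set m : ℕ := k - 1 with hmdef
  have hkm : k = m + 1 := by omega
  -- basic differentiability
  have hVdiff : Differentiable ℝ V := hV.differentiable (by norm_num)
  have hfd1 : ContDiff ℝ 1 (fderiv ℝ V) := hV.fderiv_right (by norm_num)
  have hfd1diff : Differentiable ℝ (fderiv ℝ V) := hfd1.differentiable (by norm_num)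
  have hgC1 : ContDiff ℝ 1 g := by
    have : g = fun x => (InnerProductSpace.toDual ℝ (EuclideanSpace ℝ (Fin d))).symm (fderiv ℝ V x) := rfl
    rw [this]
    exact (InnerProductSpace.toDual ℝ (EuclideanSpace ℝ (Fin d))).symm.contDiff.comp hfd1
  have hgdiff : Differentiable ℝ g := hgC1.differentiable (by norm_num)
  have hgcont : Continuous g := hgC1.continuous
  have hG'cont : Continuous (fun x => fderiv ℝ g x) := hgC1.continuous_fderiv (by norm_num)
  -- second derivative bilinear form
  set B : EuclideanSpace ℝ (Fin d) → EuclideanSpace ℝ (Fin d) →L[ℝ] EuclideanSpace ℝ (Fin d) →L[ℝ] ℝ := fun x => fderiv ℝ (fderiv ℝ V) x with hBdef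
  have hBg : ∀ x u w, (inner ℝ (fderiv ℝ g x u) w : ℝ) = B x u w := by
    intro x u w
    have hd : DifferentiableAt ℝ (fderiv ℝ V) x := hfd1diff x
    have hcomp : g = (fun L => (InnerProductSpace.toDual ℝ (EuclideanSpace ℝ (Fin d))).symm L) ∘ (fderiv ℝ V) := rfl
    rw [hcomp, fderiv_comp x ((InnerProductSpace.toDual ℝ (EuclideanSpace ℝ (Fin d))).symm.differentiableAt) hd]
    simp only [ContinuousLinearMap.coe_comp', Function.comp_apply]
    rw [LinearIsometryEquiv.fderiv]
    exact InnerProductSpace.toDual_symm_apply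
  have hgradV : ∀ x w, fderiv ℝ V x w = (inner ℝ (g x) w : ℝ) := by
    intro x w
    exact (InnerProductSpace.toDual_symm_apply (𝕜 := ℝ) (E := EuclideanSpace ℝ (Fin d))).symm
  have hBsymm : ∀ x u w, B x u w = B x w u := by
    intro x u w
    exact second_derivative_symmetric (fun y => (hVdiff y).hasFDerivAt)
      ((hfd1diff x).hasFDerivAt) u w
  have hB2 : ∀ x u, B x u u = iteratedFDeriv ℝ 2 V x ![u, u] := by
    intro x u
    rw [iteratedFDeriv_two_apply]
    simp [hBdef]
  have hB0 : ∀ x u, 0 ≤ B x u u := by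
    intro x u
    rw [hB2]
    exact le_trans (by positivity) (hHess_lower x u)
  have hdotH : ∀ (M : Matrix (Fin d) (Fin d) ℝ) (v : EuclideanSpace ℝ (Fin d)),
      (inner ℝ v (Matrix.toEuclideanLin M v) : ℝ) = dotProduct (fun i => v i) (M *ᵥ fun i => v i) := by
    intro M v
    simp [EuclideanSpace.inner_eq_star_dotProduct, toEuclideanLin_apply, dotProduct_comm]
  have hquad : ∀ v : EuclideanSpace ℝ (Fin d), (inner ℝ v (Matrix.toEuclideanLin H v) : ℝ) ≤ β * ‖v‖ ^ 2 := by
    intro v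
    have h := hHβ.dotProduct_mulVec_nonneg (fun i => v i)
    have hvv : dotProduct (fun i => v i) (fun i => v i) = ‖v‖ ^ 2 := by
      rw [← real_inner_self_eq_norm_sq]
      simp only [PiLp.inner_apply, dotProduct, RCLike.inner_apply, conj_trivial]
    rw [hdotH]
    simp only [star_trivial, sub_mulVec, smul_mulVec, one_mulVec, dotProduct_sub,
      dotProduct_smul, smul_eq_mul] at h
    rw [hvv] at h
    linarith
  have hBup : ∀ x u, B x u u ≤ β * ‖u‖ ^ 2 := fun x u =>
    le_trans (by rw [hB2]; exact hHess_upper x u) (hquad u)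
  have hdiag : ∀ (M : Matrix (Fin d) (Fin d) ℝ), M.PosSemidef → ∀ i, 0 ≤ M i i := by
    intro M hM i
    have h := hM.dotProduct_mulVec_nonneg (Pi.single i 1)
    simpa [dotProduct_single, single_dotProduct, mulVec_single] using h
  have hβ0 : 0 ≤ β := by
    have i0 : Fin d := ⟨0, hd0⟩
    have h1 := hdiag _ hHβ i0
    have h2 := hdiag _ hH i0
    simp only [Matrix.sub_apply, Matrix.smul_apply, Matrix.one_apply_eq, smul_eq_mul,
      mul_one] at h1
    linarith
  have hBcs : ∀ x u w, |B x u w| ≤ β * ‖u‖ * ‖w‖ := fun x =>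
    cs_bound hβ0 (B x) (hBsymm x) (hB0 x) (hBup x)
  -- the scalar functions
  set e : Fin d → EuclideanSpace ℝ (Fin d) := fun i => EuclideanSpace.single i 1 with hedef
  set Q : EuclideanSpace ℝ (Fin d) → ℝ := fun x => (inner ℝ (g x) (g x) : ℝ) with hQdef
  set f : Fin d → EuclideanSpace ℝ (Fin d) → ℝ :=
    fun i x => Q x ^ m * (inner ℝ (g x) (e i) : ℝ) with hfdef
  have hQdiff : Differentiable ℝ Q := hgdiff.inner ℝ hgdiff
  have hQnonneg : ∀ x, 0 ≤ Q x := fun x => real_inner_self_nonneg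
  have hQnorm : ∀ x, Q x = ‖g x‖ ^ 2 := fun x => real_inner_self_eq_norm_sq (g x)
  have hQcont : Continuous Q := hQdiff.continuous
  have hldiff : ∀ i, Differentiable ℝ (fun x => (inner ℝ (g x) (e i) : ℝ)) :=
    fun i => hgdiff.inner ℝ (differentiable_const _)
  have hfdiff : ∀ i, Differentiable ℝ (f i) := fun i => (hQdiff.pow m).mul (hldiff i)
  have hQ' : ∀ x v, fderiv ℝ Q x v = 2 * (inner ℝ (g x) (fderiv ℝ g x v) : ℝ) := by
    intro x v
    rw [hQdef]
    rw [fderiv_inner_apply ℝ (hgdiff x) (hgdiff x) v]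
    rw [real_inner_comm (fderiv ℝ g x v) (g x)]
    ring
  have hl' : ∀ i x v, fderiv ℝ (fun x => (inner ℝ (g x) (e i) : ℝ)) x v
      = (inner ℝ (fderiv ℝ g x v) (e i) : ℝ) := by
    intro i x v
    rw [fderiv_inner_apply ℝ (hgdiff x) (differentiable_const _ |>.differentiableAt) v]
    simp
  have hpow' : ∀ x v, fderiv ℝ (fun x => Q x ^ m) x v
      = (m : ℝ) * Q x ^ (m - 1) * fderiv ℝ Q x v := by
    intro x v
    have h1 : HasFDerivAt (fun x => Q x ^ m)
        (((m : ℝ) * Q x ^ (m - 1)) • fderiv ℝ Q x) x :=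
      (hasDerivAt_pow m (Q x)).comp_hasFDerivAt x (hQdiff x).hasFDerivAt
    rw [h1.fderiv]
    simp [mul_assoc]
  have hf' : ∀ i x v, fderiv ℝ (f i) x v =
      Q x ^ m * (inner ℝ (fderiv ℝ g x v) (e i) : ℝ)
      + (inner ℝ (g x) (e i) : ℝ) * ((m : ℝ) * Q x ^ (m - 1)
          * (2 * (inner ℝ (g x) (fderiv ℝ g x v) : ℝ))) := by
    intro i x v
    rw [hfdef]
    beta_reduce
    rw [fderiv_fun_mul (c := fun x => Q x ^ m) ((hQdiff.pow m) x) ((hldiff i) x)]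
    simp only [ContinuousLinearMap.add_apply, ContinuousLinearMap.smul_apply, smul_eq_mul]
    rw [hl' i x v, hpow' x v, hQ' x v]
  -- density function
  have hρdiff : Differentiable ℝ ρ := by
    have : Differentiable ℝ (fun x => -V x) := (hVdiff).neg
    exact Real.differentiable_exp.comp this
  have hρcont : Continuous ρ := hρdiff.continuous
  have hρpos : ∀ x, 0 < ρ x := fun x => Real.exp_pos _
  have hρ' : ∀ x v, fderiv ℝ ρ x v = -(inner ℝ (g x) v : ℝ) * ρ x := by
    intro x v
    have h1 : HasFDerivAt (fun x => -V x) (-(fderiv ℝ V x)) x := (hVdiff x).hasFDerivAt.neg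
    have h2 : HasFDerivAt ρ (Real.exp (-V x) • (-(fderiv ℝ V x))) x := h1.exp
    rw [h2.fderiv]
    simp only [ContinuousLinearMap.smul_apply, ContinuousLinearMap.neg_apply, smul_eq_mul]
    rw [hgradV x v]
    ring
  -- measure facts
  have hdens_meas : Measurable (fun x => ENNReal.ofReal (Real.exp (-V x))) :=
    (Real.continuous_exp.comp (hV.continuous.neg)).measurable.ennreal_ofReal
  have huniv : π Set.univ = 1 := measure_univ
  have huniv' : Z * (volume.withDensity fun x => ENNReal.ofReal (Real.exp (-V x))) Set.univ = 1 := by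
    rw [hπ] at huniv
    simpa [Measure.smul_apply, smul_eq_mul] using huniv
  have hZ0 : Z ≠ 0 := by
    intro h
    rw [h, zero_mul] at huniv'
    exact zero_ne_one huniv'
  have hZtop : Z ≠ ⊤ := by
    intro h
    rw [h] at huniv'
    rcases eq_or_ne ((volume.withDensity fun x => ENNReal.ofReal (Real.exp (-V x))) Set.univ) 0
      with h0 | h0
    · rw [h0, mul_zero] at huniv'
      exact zero_ne_one huniv'
    · rw [ENNReal.top_mul h0] at huniv'
      exact (ENNReal.top_ne_one) huniv'
  have master : ∀ n : ℕ, Integrable (fun x => ‖g x‖ ^ n * ρ x) volume := by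
    intro n
    have h := hint n
    rw [hπ, integrable_smul_measure hZ0 hZtop,
      integrable_withDensity_iff hdens_meas (Filter.Eventually.of_forall fun x =>
        ENNReal.ofReal_lt_top)] at h
    have : (fun x => ‖g x‖ ^ n * (ENNReal.ofReal (Real.exp (-V x))).toReal)
        = fun x => ‖g x‖ ^ n * ρ x := by
      funext x
      rw [ENNReal.toReal_ofReal (Real.exp_nonneg _)]
    rwa [this] at h
  have hint_eq : ∀ n : ℕ, (∫ x, ‖g x‖ ^ n ∂π) = Z.toReal * ∫ x, ‖g x‖ ^ n * ρ x := by
    intro n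
    rw [hπ, integral_smul_measure]
    have hexp_cont : Continuous fun x : EuclideanSpace ℝ (Fin d) => Real.exp (-V x) :=
      hV.continuous.neg.rexp
    have hwd : (volume.withDensity fun x => ENNReal.ofReal (Real.exp (-V x)))
        = volume.withDensity fun x => (((Real.exp (-V x)).toNNReal : ℝ≥0) : ℝ≥0∞) := rfl
    rw [hwd, integral_withDensity_eq_integral_smul hexp_cont.measurable.real_toNNReal]
    simp only [smul_eq_mul]
    congr 1
    apply integral_congr_ae
    filter_upwards with x
    rw [NNReal.smul_def, Real.coe_toNNReal _ (Real.exp_nonneg _)]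
    exact mul_comm _ _
  -- norm facts
  have hnorm_e : ∀ i, ‖e i‖ = 1 := by
    intro i
    simp [hedef, EuclideanSpace.norm_single]
  have hBinner : ∀ x u w, |(inner ℝ (fderiv ℝ g x u) w : ℝ)| ≤ β * ‖u‖ * ‖w‖ := by
    intro x u w
    rw [hBg]
    exact hBcs x u w
  have hgi : ∀ x i, |(inner ℝ (g x) (e i) : ℝ)| ≤ ‖g x‖ := by
    intro x i
    have := abs_real_inner_le_norm (g x) (e i)
    rwa [hnorm_e, mul_one] at this
  have hQpow : ∀ x, Q x ^ m = ‖g x‖ ^ (2 * m) := by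
    intro x
    rw [hQnorm, ← pow_mul]
  have hG'app : ∀ v, Continuous fun x => fderiv ℝ g x v :=
    fun v => hG'cont.clm_apply continuous_const
  have hDf_cont : ∀ i, Continuous fun x => fderiv ℝ (f i) x (e i) := by
    intro i
    have : (fun x => fderiv ℝ (f i) x (e i)) = fun x =>
        Q x ^ m * (inner ℝ (fderiv ℝ g x (e i)) (e i) : ℝ)
        + (inner ℝ (g x) (e i) : ℝ) * ((m : ℝ) * Q x ^ (m - 1)
            * (2 * (inner ℝ (g x) (fderiv ℝ g x (e i)) : ℝ))) := funext fun x => hf' i x (e i)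
    rw [this]
    exact ((hQcont.pow m).mul ((hG'app (e i)).inner continuous_const)).add
      ((hgcont.inner continuous_const).mul ((continuous_const.mul (hQcont.pow (m-1))).mul
        (continuous_const.mul (hgcont.inner (hG'app (e i))))))
  have hDf_bound : ∀ i x, |fderiv ℝ (f i) x (e i)| ≤ (2 * (m:ℝ) + 1) * β * ‖g x‖ ^ (2*m) := by
    intro i x
    rw [hf' i x (e i)]
    have ha : (0:ℝ) ≤ ‖g x‖ := norm_nonneg _
    have h1 : |Q x ^ m * (inner ℝ (fderiv ℝ g x (e i)) (e i) : ℝ)| ≤ ‖g x‖ ^ (2*m) * β := by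
      rw [abs_mul, abs_of_nonneg (pow_nonneg (hQnonneg x) m), hQpow]
      have hb := hBinner x (e i) (e i)
      rw [hnorm_e i, mul_one, mul_one] at hb
      exact mul_le_mul_of_nonneg_left hb (pow_nonneg ha _)
    have h2 : |(inner ℝ (g x) (e i) : ℝ) * ((m : ℝ) * Q x ^ (m - 1)
        * (2 * (inner ℝ (g x) (fderiv ℝ g x (e i)) : ℝ)))| ≤ 2 * (m:ℝ) * β * ‖g x‖ ^ (2*m) := by
      rcases Nat.eq_zero_or_pos m with hm0 | hm1
      · simp [hm0]
      · have hc2 : |(inner ℝ (g x) (fderiv ℝ g x (e i)) : ℝ)| ≤ β * ‖g x‖ := by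
          rw [real_inner_comm]
          have hb := hBinner x (e i) (g x)
          rwa [hnorm_e i, mul_one] at hb
        have hq1 : |Q x ^ (m-1)| = ‖g x‖ ^ (2*(m-1)) := by
          rw [abs_of_nonneg (pow_nonneg (hQnonneg x) _), hQnorm, ← pow_mul]
        have hpowid : ‖g x‖ * (‖g x‖ ^ (2*(m-1)) * (β * ‖g x‖)) = β * ‖g x‖ ^ (2*m) := by
          have h21 : 2*(m-1) + 1 + 1 = 2*m := by omega
          rw [← h21]
          ring
        calc |(inner ℝ (g x) (e i) : ℝ) * ((m : ℝ) * Q x ^ (m - 1)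
              * (2 * (inner ℝ (g x) (fderiv ℝ g x (e i)) : ℝ)))|
            = 2 * (m:ℝ) * (|(inner ℝ (g x) (e i) : ℝ)| * (|Q x ^ (m - 1)|
              * |(inner ℝ (g x) (fderiv ℝ g x (e i)) : ℝ)|)) := by
              rw [abs_mul, abs_mul, abs_mul, abs_mul]
              simp [Nat.abs_cast, abs_of_nonneg, Nat.cast_nonneg]
              ring
          _ ≤ 2 * (m:ℝ) * (‖g x‖ * (‖g x‖ ^ (2*(m-1)) * (β * ‖g x‖))) := by
              apply mul_le_mul_of_nonneg_left _ (by positivity)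
              apply mul_le_mul (hgi x i) _ (by positivity) ha
              rw [hq1]
              exact mul_le_mul_of_nonneg_left hc2 (by positivity)
          _ = 2 * (m:ℝ) * β * ‖g x‖ ^ (2*m) := by rw [hpowid]; ring
    refine le_trans (abs_add_le _ _) (le_trans (add_le_add h1 h2) (le_of_eq (by ring)))
  -- integrability of the three integrand families
  have hfabs : ∀ i x, |f i x| ≤ ‖g x‖ ^ (2*m+1) := by
    intro i x
    have hfx : f i x = Q x ^ m * (inner ℝ (g x) (e i) : ℝ) := rfl
    rw [hfx, abs_mul, abs_of_nonneg (pow_nonneg (hQnonneg x) m), hQpow x, pow_succ]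
    exact mul_le_mul_of_nonneg_left (hgi x i) (by positivity)
  have I1 : ∀ i, Integrable (fun x => f i x * ρ x) volume := by
    intro i
    apply (master (2*m+1)).mono' (((hfdiff i).continuous.mul hρcont).aestronglyMeasurable)
    filter_upwards with x
    rw [Real.norm_eq_abs, Pi.mul_apply, abs_mul, abs_of_pos (hρpos x)]
    exact mul_le_mul_of_nonneg_right (hfabs i x) (hρpos x).le
  have I2 : ∀ i, Integrable (fun x => f i x * fderiv ℝ ρ x (e i)) volume := by
    intro i
    have hfn : (fun x => f i x * fderiv ℝ ρ x (e i))
        = fun x => f i x * (-(inner ℝ (g x) (e i) : ℝ) * ρ x) := funext fun x => by rw [hρ']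
    rw [hfn]
    apply (master (2*m+2)).mono'
      (((hfdiff i).continuous.mul
        (((hgcont.inner continuous_const).neg).mul hρcont)).aestronglyMeasurable)
    filter_upwards with x
    simp only [Real.norm_eq_abs, Pi.mul_apply, Pi.neg_apply, abs_mul, abs_neg, abs_of_pos (hρpos x)]
    have h1 : |f i x| * |(inner ℝ (g x) (e i) : ℝ)| ≤ ‖g x‖ ^ (2*m+1) * ‖g x‖ :=
      mul_le_mul (hfabs i x) (hgi x i) (abs_nonneg _) (by positivity)
    have hp : ‖g x‖ ^ (2*m+1) * ‖g x‖ = ‖g x‖ ^ (2*m+2) := (pow_succ _ _).symm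
    nlinarith [mul_le_mul_of_nonneg_right h1 (hρpos x).le, hp, (hρpos x).le]
  have I3 : ∀ i, Integrable (fun x => fderiv ℝ (f i) x (e i) * ρ x) volume := by
    intro i
    apply (((master (2*m)).const_mul ((2 * (m:ℝ) + 1) * β)).mono'
      (((hDf_cont i).mul hρcont).aestronglyMeasurable))
    filter_upwards with x
    rw [Real.norm_eq_abs, Pi.mul_apply, abs_mul, abs_of_pos (hρpos x), ← mul_assoc]
    exact mul_le_mul_of_nonneg_right (hDf_bound i x) (hρpos x).le
  -- integration by parts (Stein's identity, coordinatewise)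
  have hIBP : ∀ i, ∫ x, f i x * fderiv ℝ ρ x (e i) = - ∫ x, fderiv ℝ (f i) x (e i) * ρ x :=
    fun i => integral_mul_fderiv_eq_neg_fderiv_mul_of_integrable (I3 i) (I2 i) (I1 i)
      (fun x _ => hfdiff i x) (fun x _ => hρdiff x)
  have stein : ∀ i, ∫ x, Q x ^ m * (inner ℝ (g x) (e i) : ℝ)^2 * ρ x
      = ∫ x, fderiv ℝ (f i) x (e i) * ρ x := by
    intro i
    have h := hIBP i
    have hL : (fun x => f i x * fderiv ℝ ρ x (e i))
        = fun x => -(Q x ^ m * (inner ℝ (g x) (e i) : ℝ)^2 * ρ x) := by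
      funext x
      rw [hρ' x (e i)]
      have hfx : f i x = Q x ^ m * (inner ℝ (g x) (e i) : ℝ) := rfl
      rw [hfx]; ring
    rw [hL, integral_neg] at h
    exact neg_inj.mp h
  have hIQ : ∀ i, Integrable (fun x => Q x ^ m * (inner ℝ (g x) (e i) : ℝ)^2 * ρ x) volume := by
    intro i
    apply (master (2*m+2)).mono'
      ((((hQcont.pow m).mul ((hgcont.inner continuous_const).pow 2)).mul
        hρcont).aestronglyMeasurable)
    filter_upwards with x
    rw [Real.norm_eq_abs, Pi.mul_apply, abs_mul, abs_of_pos (hρpos x), Pi.mul_apply, abs_mul]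
    simp only [Pi.pow_apply]
    have e1 : |Q x ^ m| = ‖g x‖^(2*m) := by
      rw [abs_of_nonneg (pow_nonneg (hQnonneg x) m), hQpow x]
    have e2 : |(inner ℝ (g x) (e i):ℝ)^2| ≤ ‖g x‖^2 := by
      rw [abs_of_nonneg (sq_nonneg _), ← sq_abs]
      have h := hgi x i
      nlinarith [abs_nonneg (inner ℝ (g x) (e i) : ℝ)]
    have h12 : |Q x ^ m| * |(inner ℝ (g x) (e i):ℝ)^2| ≤ ‖g x‖^(2*m) * ‖g x‖^2 := by
      rw [e1]
      exact mul_le_mul_of_nonneg_left e2 (by positivity)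
    have hp : ‖g x‖^(2*m) * ‖g x‖^2 = ‖g x‖^(2*m+2) := by rw [← pow_add]
    nlinarith [mul_le_mul_of_nonneg_right h12 (hρpos x).le, hp, (hρpos x).le]
  have hcoord : ∀ x (i : Fin d), (inner ℝ (g x) (e i) : ℝ) = g x i := by
    intro x i
    simp [hedef, EuclideanSpace.inner_single_right]
  have hsum_coord : ∀ x, ∑ i, (inner ℝ (g x) (e i) : ℝ)^2 = Q x := by
    intro x
    simp_rw [hcoord]
    have hq : Q x = ∑ i, g x i * g x i := by
      rw [hQdef]
      simp only [PiLp.inner_apply, RCLike.inner_apply, conj_trivial]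
    rw [hq]
    exact Finset.sum_congr rfl fun i _ => sq (g x i) ▸ (sq (g x i)).symm ▸ (pow_two (g x i))
  have hstein_sum : ∫ x, ‖g x‖^(2*m+2) * ρ x
      = ∫ x, (∑ i, fderiv ℝ (f i) x (e i)) * ρ x := by
    have h1 : (fun x => ‖g x‖^(2*m+2) * ρ x)
        = fun x => ∑ i, Q x ^ m * (inner ℝ (g x) (e i):ℝ)^2 * ρ x := by
      funext x
      rw [← Finset.sum_mul]
      have : ∑ i, Q x ^ m * (inner ℝ (g x) (e i):ℝ)^2 = Q x ^ m * Q x := by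
        rw [← Finset.mul_sum, hsum_coord x]
      rw [this, hQpow x, hQnorm x, ← pow_add]
    have h2 : (fun x => (∑ i, fderiv ℝ (f i) x (e i)) * ρ x)
        = fun x => ∑ i, fderiv ℝ (f i) x (e i) * ρ x := funext fun x => by
      rw [Finset.sum_mul]
    rw [h1, h2, integral_finset_sum _ (fun i _ => hIQ i),
      integral_finset_sum _ (fun i _ => I3 i)]
    exact Finset.sum_congr rfl (fun i _ => stein i)
  -- trace bound
  have htrH : ∀ x, ∑ i, (inner ℝ (fderiv ℝ g x (e i)) (e i) : ℝ) ≤ H.trace := by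
    intro x
    have : H.trace = ∑ i, H i i := rfl
    rw [this]
    apply Finset.sum_le_sum
    intro i _
    have h1 : (inner ℝ (fderiv ℝ g x (e i)) (e i) : ℝ) = B x (e i) (e i) := hBg x (e i) (e i)
    have h2 : B x (e i) (e i) ≤ (inner ℝ (e i) (Matrix.toEuclideanLin H (e i)) : ℝ) := by
      rw [hB2]
      exact hHess_upper x (e i)
    have h3 : (inner ℝ (e i) (Matrix.toEuclideanLin H (e i)) : ℝ) = H i i := by
      simp [hedef, EuclideanSpace.inner_eq_star_dotProduct, toEuclideanLin_apply, mulVec,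
        dotProduct, Pi.single_apply]
    linarith
  -- quadratic form reconstruction
  have hrecon : ∀ x, ∑ i, (inner ℝ (g x) (e i):ℝ) * (inner ℝ (g x) (fderiv ℝ g x (e i)) : ℝ)
      = B x (g x) (g x) := by
    intro x
    set c : EuclideanSpace ℝ (Fin d) →L[ℝ] ℝ :=
      (innerSL ℝ (g x)).comp (fderiv ℝ g x) with hcdef
    have hc : ∀ u, c u = (inner ℝ (g x) (fderiv ℝ g x u) : ℝ) := fun u => rfl
    have h1 : ∑ i, (inner ℝ (g x) (e i):ℝ) * (inner ℝ (g x) (fderiv ℝ g x (e i)) : ℝ)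
        = c (∑ i, (inner ℝ (g x) (e i):ℝ) • e i) := by
      rw [map_sum]
      exact Finset.sum_congr rfl fun i _ => by rw [ContinuousLinearMap.map_smul, smul_eq_mul, hc]
    have h2 : (∑ i, (inner ℝ (g x) (e i):ℝ) • e i) = g x := by
      have hb := (EuclideanSpace.basisFun (Fin d) ℝ).sum_repr (g x)
      simp_rw [EuclideanSpace.basisFun_repr, EuclideanSpace.basisFun_apply] at hb
      simp_rw [hcoord]
      exact hb
    rw [h1, h2, hc, real_inner_comm, hBg]
  -- divergence identity and bound
  have hDiv_eq : ∀ x, (∑ i, fderiv ℝ (f i) x (e i))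
      = Q x ^ m * (∑ i, (inner ℝ (fderiv ℝ g x (e i)) (e i):ℝ))
        + 2*(m:ℝ)*Q x^(m-1) * (B x (g x) (g x)) := by
    intro x
    have h1 : ∀ i, fderiv ℝ (f i) x (e i) =
        Q x ^ m * (inner ℝ (fderiv ℝ g x (e i)) (e i) : ℝ)
        + (2*(m:ℝ)*Q x^(m-1)) * ((inner ℝ (g x) (e i):ℝ)
            * (inner ℝ (g x) (fderiv ℝ g x (e i)) : ℝ)) := fun i => by
      rw [hf' i x (e i)]; ring
    simp_rw [h1]
    rw [Finset.sum_add_distrib, ← Finset.mul_sum, ← Finset.mul_sum, hrecon x, mul_assoc]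
  have hDiv_le : ∀ x, (∑ i, fderiv ℝ (f i) x (e i))
      ≤ (2*(m:ℝ)*β + H.trace) * ‖g x‖^(2*m) := by
    intro x
    rw [hDiv_eq x]
    have t1 : Q x ^ m * (∑ i, (inner ℝ (fderiv ℝ g x (e i)) (e i):ℝ))
        ≤ ‖g x‖^(2*m) * H.trace := by
      rw [← hQpow x]
      exact mul_le_mul_of_nonneg_left (htrH x) (pow_nonneg (hQnonneg x) m)
    have t2 : 2*(m:ℝ)*Q x^(m-1) * (B x (g x) (g x)) ≤ 2*(m:ℝ)*β*‖g x‖^(2*m) := by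
      rcases Nat.eq_zero_or_pos m with hm0 | hm1
      · simp [hm0]
      · have hb : B x (g x) (g x) ≤ β * Q x := by
          rw [hQnorm x]
          exact hBup x (g x)
        have step : 2*(m:ℝ)*Q x^(m-1) * (B x (g x) (g x))
            ≤ 2*(m:ℝ)*Q x^(m-1) * (β * Q x) := by
          exact mul_le_mul_of_nonneg_left hb (mul_nonneg (by positivity) (pow_nonneg (hQnonneg x) _))
        have hqq : Q x ^ (m-1) * Q x = Q x ^ m := by
          rw [← pow_succ]
          congr 1
          omega
        calc 2*(m:ℝ)*Q x^(m-1) * (B x (g x) (g x))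
            ≤ 2*(m:ℝ)*Q x^(m-1) * (β * Q x) := step
          _ = 2*(m:ℝ)*β*(Q x ^ (m-1) * Q x) := by ring
          _ = 2*(m:ℝ)*β*‖g x‖^(2*m) := by rw [hqq, hQpow x]
    calc Q x ^ m * (∑ i, (inner ℝ (fderiv ℝ g x (e i)) (e i):ℝ))
          + 2*(m:ℝ)*Q x^(m-1) * (B x (g x) (g x))
        ≤ ‖g x‖^(2*m) * H.trace + 2*(m:ℝ)*β*‖g x‖^(2*m) := add_le_add t1 t2
      _ = (2*(m:ℝ)*β + H.trace) * ‖g x‖^(2*m) := by ring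
  have hDρ_int : Integrable (fun x => (∑ i, fderiv ℝ (f i) x (e i)) * ρ x) volume := by
    have hfn : (fun x => (∑ i, fderiv ℝ (f i) x (e i)) * ρ x)
        = fun x => ∑ i, fderiv ℝ (f i) x (e i) * ρ x := funext fun x => by
      rw [Finset.sum_mul]
    rw [hfn]
    exact integrable_finset_sum _ (fun i _ => I3 i)
  have hvol_ineq : ∫ x, ‖g x‖^(2*m+2) * ρ x
      ≤ (2*(m:ℝ)*β + H.trace) * ∫ x, ‖g x‖^(2*m) * ρ x := by
    rw [hstein_sum]
    calc ∫ x, (∑ i, fderiv ℝ (f i) x (e i)) * ρ x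
        ≤ ∫ x, (2*(m:ℝ)*β + H.trace) * (‖g x‖^(2*m) * ρ x) := by
          apply integral_mono hDρ_int ((master (2*m)).const_mul _)
          intro x
          exact le_trans (mul_le_mul_of_nonneg_right (hDiv_le x) (hρpos x).le)
            (le_of_eq (mul_assoc _ _ _))
      _ = (2*(m:ℝ)*β + H.trace) * ∫ x, ‖g x‖^(2*m) * ρ x := by
          rw [integral_const_mul]
  -- conclusion
  have hC : ((2*(k:ℝ)-2)*β + H.trace) = 2*(m:ℝ)*β + H.trace := by
    rw [hkm]; push_cast; ring
  have h2k : 2*k = 2*m+2 := by omega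
  rw [hint_eq (2*k), hint_eq (2*m), hC, h2k]
  calc Z.toReal * ∫ x, ‖g x‖^(2*m+2) * ρ x
      ≤ Z.toReal * ((2*(m:ℝ)*β + H.trace) * ∫ x, ‖g x‖^(2*m) * ρ x) :=
        mul_le_mul_of_nonneg_left hvol_ineq ENNReal.toReal_nonneg
    _ = (2*(m:ℝ)*β + H.trace) * (Z.toReal * ∫ x, ‖g x‖^(2*m) * ρ x) := by ring
end

section
/- For any probability measures μ, ν, π (with μ ≪ ν ≪ π), KL(μ‖π) ≤ 2 KL(μ‖ν) + log(1 + χ²(ν‖π)), where χ² denotes the chi-squared divergence. -/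
open MeasureTheory

/-- for probability measures `μ ≪ ν ≪ π`,
`KL(μ‖ν) ≤ 2 KL(μ‖ν) + log (1 + χ²(ν‖π))`, where `KL(μ‖ν) = ∫ log (dμ/dν) dμ` and
`χ²(ν‖π) = ∫ (dν/dπ)² dπ - 1`. -/
theorem kl_le_two_kl_add_log_chisq
    {X : Type*} [MeasurableSpace X] (μ ν π : Measure X)
    [IsProbabilityMeasure μ] [IsProbabilityMeasure ν] [IsProbabilityMeasure π]
    (hμν : μ ≪ ν) (hνπ : ν ≪ π)
    (hklμπ : Integrable (llr μ π) μ) (hklμν : Integrable (llr μ ν) μ)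
    (hchi : Integrable (fun x => (ν.rnDeriv π x).toReal ^ 2) π) :
    ∫ x, llr μ π x ∂μ ≤
      2 * ∫ x, llr μ ν x ∂μ +
        Real.log (1 + ((∫ x, (ν.rnDeriv π x).toReal ^ 2 ∂π) - 1)) := by
  set f : X → ℝ := fun x => (μ.rnDeriv ν x).toReal with hf_def
  set g : X → ℝ := fun x => (ν.rnDeriv π x).toReal with hg_def
  set c : ℝ := ∫ x, g x ^ 2 ∂π with hc_def
  have hf_meas : Measurable f := (Measure.measurable_rnDeriv μ ν).ennreal_toReal
  have hg_meas : Measurable g := (Measure.measurable_rnDeriv ν π).ennreal_toReal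
  -- `∫ g dν = c`
  have hgν_int : Integrable g ν := by
    rw [← integrable_rnDeriv_smul_iff hνπ]
    refine hchi.congr (Filter.EventuallyEq.of_eq ?_)
    funext x; simp [smul_eq_mul, sq]
    exact Or.inl rfl
  have hgν : ∫ x, g x ∂ν = c := by
    rw [hc_def, ← integral_rnDeriv_smul hνπ (f := g)]
    congr 1; funext x; simp [smul_eq_mul, sq]
    exact Or.inl rfl
  -- `1 ≤ c`
  have hgπ : ∫ x, g x ∂π = 1 := by
    simpa using Measure.integral_toReal_rnDeriv hνπ
  have hgπ_int : Integrable g π := Measure.integrable_toReal_rnDeriv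
  have h1c : 1 ≤ c := by
    have h : ∫ x, (2 * g x - 1) ∂π ≤ ∫ x, g x ^ 2 ∂π := by
      refine integral_mono ((hgπ_int.const_mul 2).sub (integrable_const 1)) hchi ?_
      intro x
      show 2 * g x - 1 ≤ g x ^ 2
      nlinarith [sq_nonneg (g x - 1)]
    rw [integral_sub (hgπ_int.const_mul 2) (integrable_const 1),
      integral_const_mul, hgπ, integral_const] at h
    simp only [measure_univ, probReal_univ, ENNReal.toReal_one, smul_eq_mul, mul_one] at h
    rw [hc_def]; linarith
  have hc0 : 0 < c := lt_of_lt_of_le one_pos h1c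
  -- the ratio `ψ = g / f`
  set ψ : X → ℝ := fun x => g x / f x with hψ_def
  have hfψ_le : ∀ x, f x • ψ x ≤ g x := by
    intro x
    rcases eq_or_ne (f x) 0 with h | h
    · rw [h, zero_smul]; exact ENNReal.toReal_nonneg
    · exact le_of_eq (mul_div_cancel₀ (g x) h)
  have hfψ_int : Integrable (fun x => f x • ψ x) ν := by
    refine hgν_int.mono ((hf_meas.mul (hg_meas.div hf_meas)).aestronglyMeasurable) ?_
    refine Filter.Eventually.of_forall fun x => ?_
    have h0 : 0 ≤ f x • ψ x := by
      simp only [smul_eq_mul, hψ_def]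
      positivity
    rw [Real.norm_eq_abs, Real.norm_eq_abs, abs_of_nonneg h0,
      abs_of_nonneg ENNReal.toReal_nonneg]
    exact hfψ_le x
  have hψ_int : Integrable ψ μ := (integrable_rnDeriv_smul_iff hμν).mp hfψ_int
  have hψμ_le : ∫ x, ψ x ∂μ ≤ c := by
    rw [← integral_rnDeriv_smul hμν (f := ψ), ← hgν]
    exact integral_mono hfψ_int hgν_int hfψ_le
  -- a.e. positivity/finiteness facts
  have hf_pos : ∀ᵐ x ∂μ, 0 < μ.rnDeriv ν x := Measure.rnDeriv_pos hμν
  have hf_fin : ∀ᵐ x ∂μ, μ.rnDeriv ν x < ⊤ := hμν.ae_le (Measure.rnDeriv_lt_top μ ν)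
  have hg_pos : ∀ᵐ x ∂μ, 0 < ν.rnDeriv π x := hμν.ae_le (Measure.rnDeriv_pos hνπ)
  have hg_fin : ∀ᵐ x ∂μ, ν.rnDeriv π x < ⊤ :=
    hμν.ae_le (hνπ.ae_le (Measure.rnDeriv_lt_top ν π))
  have hmul : ∀ᵐ x ∂μ, μ.rnDeriv ν x * ν.rnDeriv π x = μ.rnDeriv π x :=
    hμν.ae_le (Measure.rnDeriv_mul_rnDeriv' hνπ)
  -- chain rule for llr, μ-a.e.
  have hchain : ∀ᵐ x ∂μ, llr μ π x = llr μ ν x + llr ν π x := by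
    filter_upwards [hf_pos, hf_fin, hg_pos, hg_fin, hmul] with x h1 h2 h3 h4 h5
    have hfx : f x ≠ 0 := by
      simp only [hf_def, ne_eq, ENNReal.toReal_eq_zero_iff]
      push_neg; exact ⟨h1.ne', h2.ne⟩
    have hgx : g x ≠ 0 := by
      simp only [hg_def, ne_eq, ENNReal.toReal_eq_zero_iff]
      push_neg; exact ⟨h3.ne', h4.ne⟩
    simp only [llr_def, ← h5, ENNReal.toReal_mul]
    exact Real.log_mul hfx hgx
  have hL_int : Integrable (llr ν π) μ :=
    (hklμπ.sub hklμν).congr (by filter_upwards [hchain] with x hx; simp only [Pi.sub_apply, hx]; ring)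
  have hsplit : ∫ x, llr μ π x ∂μ = ∫ x, llr μ ν x ∂μ + ∫ x, llr ν π x ∂μ := by
    rw [integral_congr_ae hchain, integral_add hklμν hL_int]
  -- pointwise bound: `llr ν π ≤ llr μ ν + ψ/c - 1 + log c` μ-a.e.
  have hptwise : ∀ᵐ x ∂μ, llr ν π x ≤ llr μ ν x + (ψ x / c - 1 + Real.log c) := by
    filter_upwards [hf_pos, hf_fin, hg_pos, hg_fin] with x h1 h2 h3 h4
    have hfx : 0 < f x := ENNReal.toReal_pos h1.ne' h2.ne
    have hgx : 0 < g x := ENNReal.toReal_pos h3.ne' h4.ne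
    have ht : 0 < g x / (c * f x) := by positivity
    have key := Real.log_le_sub_one_of_pos ht
    rw [Real.log_div hgx.ne' (by positivity), Real.log_mul hc0.ne' hfx.ne'] at key
    have hψc : ψ x / c = g x / (c * f x) := by
      simp only [hψ_def]; rw [div_div, mul_comm]
    rw [← hψc] at key
    simp only [llr_def]
    linarith
  have hI2 : Integrable (fun x => ψ x / c) μ := hψ_int.div_const c
  have hbound : ∫ x, llr ν π x ∂μ ≤
      ∫ x, llr μ ν x ∂μ + ((∫ x, ψ x ∂μ) / c - 1 + Real.log c) := by
    have hint : Integrable (fun x => llr μ ν x + (ψ x / c - 1 + Real.log c)) μ := by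
      refine hklμν.add ?_
      exact (hI2.sub (integrable_const 1)).add (integrable_const (Real.log c))
    have step : ∫ x, llr ν π x ∂μ ≤ ∫ x, (llr μ ν x + (ψ x / c - 1 + Real.log c)) ∂μ :=
      integral_mono_ae hL_int hint hptwise
    have e1 : ∫ x, (llr μ ν x + (ψ x / c - 1 + Real.log c)) ∂μ
        = ∫ x, llr μ ν x ∂μ + ((∫ x, ψ x / c ∂μ) - 1 + Real.log c) := by
      rw [integral_add (f := fun x => llr μ ν x)
        (g := fun x => ψ x / c - 1 + Real.log c) hklμν
        ((hI2.sub (integrable_const 1)).add (integrable_const (Real.log c))),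
        integral_add (f := fun x => ψ x / c - 1) (g := fun _ => Real.log c)
        (hI2.sub (integrable_const 1)) (integrable_const (Real.log c)),
        integral_sub (f := fun x => ψ x / c) (g := fun _ => (1:ℝ)) hI2 (integrable_const 1)]
      simp
    have e2 : ∫ x, ψ x / c ∂μ = (∫ x, ψ x ∂μ) / c := MeasureTheory.integral_div c ψ
    rw [e1, e2] at step
    exact step
  have hψc1 : (∫ x, ψ x ∂μ) / c ≤ 1 := by
    rw [div_le_one hc0]; exact hψμ_le
  have hfinal : (1 : ℝ) + (c - 1) = c := by ring
  rw [hfinal, hsplit]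
  linarith
end

section
/- Let f : [0, T] → [0, ∞) be continuous and satisfy f(t) ≤ A + B·t·∫_0^t (t-s)² f(s) ds for all t ∈ [0, T], where A, B ≥ 0. Then f(t) ≤ A·exp(B t⁴ / 3) for all t ∈ [0, T]. -/
private lemma hasDerivAt_congr' {f g : ℝ → ℝ} {a b x : ℝ} (h : HasDerivAt f a x)
    (hfg : ∀ y, f y = g y) (hab : a = b) : HasDerivAt g b x := by
  subst hab
  exact h.congr_of_eventuallyEq (Filter.Eventually.of_forall fun y => (hfg y).symm)

/-- Grönwall-type inequality: if `f : [0,T] → [0,∞)` is continuous and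
satisfies `f t ≤ A + B t ∫_0^t (t-s)² f s ds` for all `t ∈ [0,T]` with `A, B ≥ 0`, then
`f t ≤ A exp (B t⁴ / 3)` on `[0,T]`. -/
theorem gronwall_cubic_kernel (T A B : ℝ) (hT : 0 ≤ T) (hA : 0 ≤ A) (hB : 0 ≤ B)
    (f : ℝ → ℝ) (hf : ContinuousOn f (Set.Icc 0 T))
    (hfnn : ∀ t ∈ Set.Icc 0 T, 0 ≤ f t)
    (hineq : ∀ t ∈ Set.Icc 0 T, f t ≤ A + B * t * ∫ s in (0:ℝ)..t, (t - s) ^ 2 * f s) :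
    ∀ t ∈ Set.Icc 0 T, f t ≤ A * Real.exp (B * t ^ 4 / 3) := by
  -- continuous extension of f to all of ℝ
  set F : ℝ → ℝ := fun t => f (max 0 (min t T)) with hFdef
  have hmem : ∀ t : ℝ, max 0 (min t T) ∈ Set.Icc 0 T := fun t =>
    ⟨le_max_left _ _, max_le hT (min_le_right _ _)⟩
  have hFcont : Continuous F :=
    hf.comp_continuous (continuous_const.max (continuous_id.min continuous_const)) hmem
  have hFeq : ∀ t ∈ Set.Icc 0 T, F t = f t := by
    rintro t ⟨h0, h1⟩
    simp [hFdef, min_eq_left h1, max_eq_right h0]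
  have hFnn : ∀ t, 0 ≤ F t := fun t => hfnn _ (hmem t)
  -- FTC helper
  have hd : ∀ (g : ℝ → ℝ), Continuous g → ∀ t : ℝ,
      HasDerivAt (fun u => ∫ s in (0:ℝ)..u, g s) (g t) t := fun g hg t =>
    intervalIntegral.integral_hasDerivAt_right (hg.intervalIntegrable 0 t)
      (hg.stronglyMeasurableAtFilter _ _) hg.continuousAt
  have hc1 : Continuous (fun s : ℝ => s * F s) := continuous_id.mul hFcont
  have hc2 : Continuous (fun s : ℝ => s ^ 2 * F s) := (continuous_pow 2).mul hFcont
  set I0 : ℝ → ℝ := fun t => ∫ s in (0:ℝ)..t, F s with hI0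
  set I1 : ℝ → ℝ := fun t => ∫ s in (0:ℝ)..t, s * F s with hI1
  set I2 : ℝ → ℝ := fun t => ∫ s in (0:ℝ)..t, s ^ 2 * F s with hI2
  set G : ℝ → ℝ := fun t => A + B * (t ^ 3 * I0 t - 2 * t ^ 2 * I1 t + t * I2 t) with hGdef
  -- G t is the Grönwall majorant
  have hGeq : ∀ t : ℝ, G t = A + B * t * ∫ s in (0:ℝ)..t, (t - s) ^ 2 * F s := by
    intro t
    have e1 : (∫ s in (0:ℝ)..t, (t - s) ^ 2 * F s)
        = ∫ s in (0:ℝ)..t, (t ^ 2 * F s - 2 * t * (s * F s) + s ^ 2 * F s) := by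
      apply intervalIntegral.integral_congr
      intro s _; ring
    have e2 : (∫ s in (0:ℝ)..t, (t ^ 2 * F s - 2 * t * (s * F s) + s ^ 2 * F s))
        = t ^ 2 * I0 t - 2 * t * I1 t + I2 t := by
      rw [intervalIntegral.integral_add, intervalIntegral.integral_sub,
        intervalIntegral.integral_const_mul, intervalIntegral.integral_const_mul]
      · exact (hFcont.intervalIntegrable 0 t).const_mul _
      · exact (hc1.intervalIntegrable 0 t).const_mul _
      · exact ((hFcont.intervalIntegrable 0 t).const_mul _).sub
          ((hc1.intervalIntegrable 0 t).const_mul _)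
      · exact hc2.intervalIntegrable 0 t
    rw [e1, e2, hGdef]; ring
  -- derivative of G
  have hG' : ∀ t : ℝ, HasDerivAt G
      (B * (3 * t ^ 2 * I0 t - 4 * t * I1 t + I2 t
        + (t ^ 3 * F t - 2 * t ^ 2 * (t * F t) + t * (t ^ 2 * F t)))) t := by
    intro t
    have h0 := hd F hFcont t
    have h1 := hd _ hc1 t
    have h2 := hd _ hc2 t
    have hmain := ((((hasDerivAt_pow 3 t).mul h0).sub
        ((((hasDerivAt_pow 2 t).mul h1)).const_mul 2)).add ((hasDerivAt_id t).mul h2))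
    have := (hmain.const_mul B).const_add A
    refine hasDerivAt_congr' this (fun x => ?_) ?_
    · simp only [hGdef, hI0, hI1, hI2, id_eq, Pi.mul_apply, Pi.sub_apply, Pi.add_apply]; ring
    · simp only [hI0, hI1, hI2, id_eq]; push_cast; ring
  have hG'' : ∀ t : ℝ, HasDerivAt G (B * (3 * t ^ 2 * I0 t - 4 * t * I1 t + I2 t)) t := by
    intro t
    exact hasDerivAt_congr' (hG' t) (fun _ => rfl) (by ring)
  have hGdiff : Differentiable ℝ G := fun t => (hG'' t).differentiableAt
  -- the derivative as a single integral
  have hDint : ∀ t : ℝ, 3 * t ^ 2 * I0 t - 4 * t * I1 t + I2 t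
      = ∫ s in (0:ℝ)..t, (3 * t ^ 2 - 4 * t * s + s ^ 2) * F s := by
    intro t
    have e1 : (∫ s in (0:ℝ)..t, (3 * t ^ 2 - 4 * t * s + s ^ 2) * F s)
        = ∫ s in (0:ℝ)..t, (3 * t ^ 2 * F s - 4 * t * (s * F s) + s ^ 2 * F s) := by
      apply intervalIntegral.integral_congr
      intro s _; ring
    rw [e1, intervalIntegral.integral_add, intervalIntegral.integral_sub,
      intervalIntegral.integral_const_mul, intervalIntegral.integral_const_mul]
    · exact (hFcont.intervalIntegrable 0 t).const_mul _
    · exact (hc1.intervalIntegrable 0 t).const_mul _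
    · exact ((hFcont.intervalIntegrable 0 t).const_mul _).sub
        ((hc1.intervalIntegrable 0 t).const_mul _)
    · exact hc2.intervalIntegrable 0 t
  -- G is monotone on [0, T]
  have hG'nonneg : ∀ t : ℝ, 0 ≤ t → 0 ≤ B * (3 * t ^ 2 * I0 t - 4 * t * I1 t + I2 t) := by
    intro t ht
    apply mul_nonneg hB
    rw [hDint t]
    apply intervalIntegral.integral_nonneg ht
    intro s hs
    have h1 : s ≤ t := hs.2
    have h0 : 0 ≤ s := hs.1
    have : 0 ≤ (3 * t - s) * (t - s) := by nlinarith
    have := mul_nonneg this (hFnn s)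
    nlinarith [hFnn s]
  have hGmono : MonotoneOn G (Set.Icc 0 T) := by
    apply monotoneOn_of_deriv_nonneg (convex_Icc 0 T) hGdiff.continuous.continuousOn
      (hGdiff.differentiableOn.mono interior_subset)
    intro x hx
    rw [interior_Icc] at hx
    rw [(hG'' x).deriv]
    exact hG'nonneg x hx.1.le
  -- f ≤ G on [0,T]
  have hfG : ∀ t ∈ Set.Icc 0 T, f t ≤ G t := by
    intro t ht
    have : (∫ s in (0:ℝ)..t, (t - s) ^ 2 * f s) = ∫ s in (0:ℝ)..t, (t - s) ^ 2 * F s := by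
      apply intervalIntegral.integral_congr
      intro s hs
      rw [Set.uIcc_of_le ht.1] at hs
      dsimp only
      rw [hFeq s ⟨hs.1, hs.2.trans ht.2⟩]
    rw [hGeq t, ← this]
    exact hineq t ht
  -- key inequality: G' t ≤ (4 B t³ / 3) G t on [0,T]
  have hkey : ∀ t ∈ Set.Icc 0 T,
      B * (3 * t ^ 2 * I0 t - 4 * t * I1 t + I2 t) ≤ B * (4 * t ^ 3 / 3) * G t := by
    intro t ht
    have hmono : (∫ s in (0:ℝ)..t, (3 * t ^ 2 - 4 * t * s + s ^ 2) * F s)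
        ≤ ∫ s in (0:ℝ)..t, (3 * t ^ 2 - 4 * t * s + s ^ 2) * G t := by
      apply intervalIntegral.integral_mono_on ht.1
      · exact (((continuous_const.sub (continuous_const.mul continuous_id)).add
          (continuous_pow 2)).mul hFcont).intervalIntegrable 0 t
      · exact (((continuous_const.sub (continuous_const.mul continuous_id)).add
          (continuous_pow 2)).mul continuous_const).intervalIntegrable 0 t
      · intro s hs
        have h0 : 0 ≤ s := hs.1
        have h1 : s ≤ t := hs.2
        have hsT : s ∈ Set.Icc 0 T := ⟨h0, h1.trans ht.2⟩
        have hfact : 0 ≤ 3 * t ^ 2 - 4 * t * s + s ^ 2 := by nlinarith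
        have hFs : F s ≤ G t := by
          rw [hFeq s hsT]
          exact (hfG s hsT).trans (hGmono hsT ht h1)
        exact mul_le_mul_of_nonneg_left hFs hfact
    have hpoly : (∫ s in (0:ℝ)..t, (3 * t ^ 2 - 4 * t * s + s ^ 2) * G t)
        = (4 * t ^ 3 / 3) * G t := by
      rw [intervalIntegral.integral_mul_const]
      congr 1
      have hP : ∀ s ∈ Set.uIcc (0:ℝ) t,
          HasDerivAt (fun s => 3 * t ^ 2 * s - 2 * t * s ^ 2 + s ^ 3 / 3)
            (3 * t ^ 2 - 4 * t * s + s ^ 2) s := by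
        intro s _
        have h1 : HasDerivAt (fun s : ℝ => 3 * t ^ 2 * s) (3 * t ^ 2) s := by
          simpa using (hasDerivAt_id s).const_mul (3 * t ^ 2)
        have h2 : HasDerivAt (fun s : ℝ => 2 * t * s ^ 2) (2 * t * (2 * s)) s := by
          simpa using ((hasDerivAt_pow 2 s)).const_mul (2 * t)
        have h3 : HasDerivAt (fun s : ℝ => s ^ 3 / 3) (3 * s ^ 2 / 3) s := by
          simpa using (hasDerivAt_pow 3 s).div_const 3
        exact ((h1.sub h2).add h3).congr_deriv (by ring)
      rw [intervalIntegral.integral_eq_sub_of_hasDerivAt hP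
        (((continuous_const.sub (continuous_const.mul continuous_id)).add
          (continuous_pow 2)).intervalIntegrable 0 t)]
      ring
    calc B * (3 * t ^ 2 * I0 t - 4 * t * I1 t + I2 t)
        = B * ∫ s in (0:ℝ)..t, (3 * t ^ 2 - 4 * t * s + s ^ 2) * F s := by rw [hDint]
      _ ≤ B * ((4 * t ^ 3 / 3) * G t) := by
          apply mul_le_mul_of_nonneg_left _ hB
          rw [← hpoly]; exact hmono
      _ = B * (4 * t ^ 3 / 3) * G t := by ring
  -- H = G * exp(-(B t⁴ / 3)) is antitone on [0,T]
  set H : ℝ → ℝ := fun t => G t * Real.exp (-(B * t ^ 4 / 3)) with hHdef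
  have hE' : ∀ t : ℝ, HasDerivAt (fun t : ℝ => -(B * t ^ 4 / 3))
      (-(B * (4 * t ^ 3) / 3)) t := by
    intro t
    exact hasDerivAt_congr' (((hasDerivAt_pow 4 t).const_mul B).div_const 3).neg
      (fun _ => rfl) (by push_cast; ring)
  have hH' : ∀ t : ℝ, HasDerivAt H
      ((B * (3 * t ^ 2 * I0 t - 4 * t * I1 t + I2 t)) * Real.exp (-(B * t ^ 4 / 3))
        + G t * (Real.exp (-(B * t ^ 4 / 3)) * (-(B * (4 * t ^ 3) / 3)))) t := by
    intro t
    exact (hG'' t).mul ((hE' t).exp)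
  have hHdiff : Differentiable ℝ H := fun t => (hH' t).differentiableAt
  have hHanti : AntitoneOn H (Set.Icc 0 T) := by
    apply antitoneOn_of_deriv_nonpos (convex_Icc 0 T) hHdiff.continuous.continuousOn
      (hHdiff.differentiableOn.mono interior_subset)
    intro x hx
    rw [interior_Icc] at hx
    rw [(hH' x).deriv]
    have hkx := hkey x ⟨hx.1.le, hx.2.le⟩
    have hEpos : 0 < Real.exp (-(B * x ^ 4 / 3)) := Real.exp_pos _
    nlinarith [hkx, hEpos, mul_le_mul_of_nonneg_right hkx hEpos.le]
  -- conclude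
  intro t ht
  have hH0 : H 0 = A := by
    simp [hHdef, hGdef, hI0, hI1, hI2]
  have := hHanti (Set.left_mem_Icc.2 hT) ht ht.1
  rw [hH0] at this
  have hEpos : 0 < Real.exp (B * t ^ 4 / 3) := Real.exp_pos _
  have hGt : G t ≤ A * Real.exp (B * t ^ 4 / 3) := by
    have h2 := mul_le_mul_of_nonneg_right this hEpos.le
    rwa [hHdef, mul_assoc, ← Real.exp_add, neg_add_cancel, Real.exp_zero, mul_one] at h2
  exact (hfG t ht).trans hGt
end
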